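/- arXiv:1711.02419 — 3 statements merged into one kernel-verified Lean document; each statement's English description precedes it below -/
import Mathlib

section
/- Suppose the graph G (with vertex set V and adjacency i ~ j iff ω_{ij} > 0) is connected and bipartite with bipartition (T, V∖T), meaning every edge of G has exactly one endpoint in T. Then the kernel of the signless Laplacian L_0^+ = D + A is one-dimensional and is spanned by the function χ_T − χ_{V∖T}, i.e., every u with (D + A)u = 0 is a scalar multiple of χ_T − χ_{V∖T}. -/
open Matrix

/-!
Expanding the quadratic form gives `2 uᵀ(D + A)u = ∑ᵢⱼ ωᵢⱼ (uᵢ + uⱼ)²`, so `(D + A)u = 0` holds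
exactly when `u` changes sign across every edge. The same is true of `χ_T - χ_{Tᶜ}`, which takes
the values `±1`; hence on a kernel vector `u` the product `u · (χ_T - χ_{Tᶜ})` is constant along
edges, and therefore constant because the graph is connected.
-/

variable {V : Type*}

def signlessLaplacian [Fintype V] [DecidableEq V] (ω : V → V → ℝ) : Matrix V V ℝ :=
  diagonal (fun i => ∑ j, ω i j) + of ω

section SignlessLaplacian

variable [Fintype V] [DecidableEq V]

theorem signlessLaplacian_mulVec_apply (ω : V → V → ℝ) (u : V → ℝ) (i : V) :
    (signlessLaplacian ω *ᵥ u) i = ∑ j, ω i j * (u i + u j) := by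
  rw [signlessLaplacian, add_mulVec, Pi.add_apply, mulVec_diagonal]
  simp only [mulVec, dotProduct, of_apply, mul_add, Finset.sum_add_distrib, Finset.sum_mul]

theorem two_mul_dotProduct_signlessLaplacian_mulVec {ω : V → V → ℝ}
    (hsymm : ∀ i j, ω i j = ω j i) (u : V → ℝ) :
    2 * (u ⬝ᵥ (signlessLaplacian ω *ᵥ u)) = ∑ i, ∑ j, ω i j * (u i + u j) ^ 2 := by
  have hswap : ∑ i, ∑ j, ω i j * (u i + u j) * u j = ∑ i, ∑ j, ω i j * (u i + u j) * u i := by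
    rw [Finset.sum_comm]
    exact Finset.sum_congr rfl fun i _ => Finset.sum_congr rfl fun j _ => by
      rw [hsymm, add_comm]
  calc 2 * (u ⬝ᵥ (signlessLaplacian ω *ᵥ u))
      = ∑ i, ∑ j, ω i j * (u i + u j) * u i + ∑ i, ∑ j, ω i j * (u i + u j) * u j := by
        simp only [hswap, ← two_mul, dotProduct, signlessLaplacian_mulVec_apply, Finset.sum_mul,
          mul_comm (u _)]
    _ = ∑ i, ∑ j, ω i j * (u i + u j) ^ 2 := by
        simp only [← Finset.sum_add_distrib]
        exact Finset.sum_congr rfl fun i _ => Finset.sum_congr rfl fun j _ => by ring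

theorem signlessLaplacian_mulVec_eq_zero_iff {ω : V → V → ℝ}
    (hsymm : ∀ i j, ω i j = ω j i) (hnonneg : ∀ i j, 0 ≤ ω i j) (u : V → ℝ) :
    signlessLaplacian ω *ᵥ u = 0 ↔ ∀ i j, 0 < ω i j → u j = -u i := by
  constructor
  · intro hu i j hω
    have hterms : ∑ i, ∑ j, ω i j * (u i + u j) ^ 2 = 0 := by
      rw [← two_mul_dotProduct_signlessLaplacian_mulVec hsymm, hu, dotProduct_zero, mul_zero]
    have hterm : ω i j * (u i + u j) ^ 2 = 0 := by
      have hnn : ∀ i j, 0 ≤ ω i j * (u i + u j) ^ 2 := fun i j => by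
        have := hnonneg i j; positivity
      rw [Finset.sum_eq_zero_iff_of_nonneg fun i _ => Finset.sum_nonneg fun j _ => hnn i j]
        at hterms
      exact (Finset.sum_eq_zero_iff_of_nonneg fun j _ => hnn i j).1
        (hterms i (Finset.mem_univ i)) j (Finset.mem_univ j)
    have := pow_eq_zero_iff two_ne_zero |>.1 ((mul_eq_zero.1 hterm).resolve_left hω.ne')
    linarith
  · intro h
    funext i
    rw [signlessLaplacian_mulVec_apply, Pi.zero_apply]
    refine Finset.sum_eq_zero fun j _ => ?_
    rcases (hnonneg i j).eq_or_lt with hω | hω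
    · rw [← hω, zero_mul]
    · rw [h i j hω, add_neg_cancel, mul_zero]

end SignlessLaplacian

theorem SimpleGraph.Reachable.eq_of_forall_adj {α : Type*} {G : SimpleGraph V} {g : V → α}
    (hg : ∀ i j, G.Adj i j → g j = g i) {i j : V} (hij : G.Reachable i j) : g i = g j := by
  obtain ⟨p⟩ := hij
  induction p with
  | nil => rfl
  | cons h _ ih => exact (hg _ _ h).symm.trans ih

section BipartiteSign

variable (T : Set V)

theorem indicator_sub_indicator_compl_mul_self (i : V) :
    (T.indicator (fun _ => (1 : ℝ)) - Tᶜ.indicator (fun _ => (1 : ℝ))) i *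
      (T.indicator (fun _ => (1 : ℝ)) - Tᶜ.indicator (fun _ => (1 : ℝ))) i = 1 := by
  by_cases hi : i ∈ T <;> simp [hi]

theorem indicator_sub_indicator_compl_apply_of_separates {i j : V}
    (hij : (i ∈ T ∧ j ∉ T) ∨ (j ∈ T ∧ i ∉ T)) :
    (T.indicator (fun _ => (1 : ℝ)) - Tᶜ.indicator (fun _ => (1 : ℝ))) j =
      -(T.indicator (fun _ => (1 : ℝ)) - Tᶜ.indicator (fun _ => (1 : ℝ))) i := by
  rcases hij with ⟨hi, hj⟩ | ⟨hj, hi⟩ <;> simp [hi, hj]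

end BipartiteSign

section Kernel

variable [Fintype V] [DecidableEq V] {ω : V → V → ℝ} {G : SimpleGraph V} {s : V → ℝ}

theorem signlessLaplacian_mulVec_eq_zero_iff_exists_eq_smul (hsymm : ∀ i j, ω i j = ω j i)
    (hnonneg : ∀ i j, 0 ≤ ω i j) (hG : ∀ i j, G.Adj i j → 0 < ω i j) (hconn : G.Connected)
    (hs_sq : ∀ i, s i * s i = 1) (hs : ∀ i j, 0 < ω i j → s j = -s i) (u : V → ℝ) :
    signlessLaplacian ω *ᵥ u = 0 ↔ ∃ c : ℝ, u = c • s := by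
  rw [signlessLaplacian_mulVec_eq_zero_iff hsymm hnonneg]
  constructor
  · intro hu
    obtain ⟨i₀⟩ := hconn.nonempty
    refine ⟨u i₀ * s i₀, funext fun i => ?_⟩
    have hconst : u i₀ * s i₀ = u i * s i := (hconn i₀ i).eq_of_forall_adj (g := u * s)
      fun i j hij => by
        simp only [Pi.mul_apply, hu i j (hG i j hij), hs i j (hG i j hij), neg_mul_neg]
    rw [hconst, Pi.smul_apply, smul_eq_mul, mul_assoc, hs_sq, mul_one]
  · rintro ⟨c, rfl⟩ i j hω
    simp only [Pi.smul_apply, smul_eq_mul, hs i j hω, mul_neg]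

theorem ker_toLin'_signlessLaplacian_eq_span (hsymm : ∀ i j, ω i j = ω j i)
    (hnonneg : ∀ i j, 0 ≤ ω i j) (hG : ∀ i j, G.Adj i j → 0 < ω i j) (hconn : G.Connected)
    (hs_sq : ∀ i, s i * s i = 1) (hs : ∀ i j, 0 < ω i j → s j = -s i) :
    LinearMap.ker (toLin' (signlessLaplacian ω)) = Submodule.span ℝ {s} := by
  ext u
  rw [LinearMap.mem_ker, toLin'_apply, Submodule.mem_span_singleton,
    signlessLaplacian_mulVec_eq_zero_iff_exists_eq_smul hsymm hnonneg hG hconn hs_sq hs]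
  exact exists_congr fun c => eq_comm

theorem finrank_ker_toLin'_signlessLaplacian (hsymm : ∀ i j, ω i j = ω j i)
    (hnonneg : ∀ i j, 0 ≤ ω i j) (hG : ∀ i j, G.Adj i j → 0 < ω i j) (hconn : G.Connected)
    (hs_sq : ∀ i, s i * s i = 1) (hs : ∀ i j, 0 < ω i j → s j = -s i) :
    Module.finrank ℝ (LinearMap.ker (toLin' (signlessLaplacian ω))) = 1 := by
  obtain ⟨i₀⟩ := hconn.nonempty
  have hs_ne : s ≠ 0 := fun h => by simpa [h] using hs_sq i₀
  rw [ker_toLin'_signlessLaplacian_eq_span hsymm hnonneg hG hconn hs_sq hs,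
    finrank_span_singleton hs_ne]

end Kernel

theorem signlessLaplacian_ker_of_bipartite_general
    (n : ℕ) (ω : Fin n → Fin n → ℝ)
    (hsymm : ∀ i j, ω i j = ω j i) (hnonneg : ∀ i j, 0 ≤ ω i j)
    (hdiag : ∀ i, ω i i = 0)
    (d : Fin n → ℝ) (hd : ∀ i, d i = ∑ j, ω i j)
    (A : Matrix (Fin n) (Fin n) ℝ) (hA : ∀ i j, A i j = ω i j)
    (L₀p : Matrix (Fin n) (Fin n) ℝ) (hL₀p : L₀p = Matrix.diagonal d + A)
    (G : SimpleGraph (Fin n)) (hG : ∀ i j, G.Adj i j ↔ i ≠ j ∧ 0 < ω i j)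
    (hconn : G.Connected)
    (T : Set (Fin n))
    (hT : ∀ i j, G.Adj i j → ((i ∈ T ∧ j ∉ T) ∨ (j ∈ T ∧ i ∉ T)))
    (f : Fin n → ℝ)
    (hf : f = Set.indicator T (fun _ => (1 : ℝ))
        - Set.indicator Tᶜ (fun _ => (1 : ℝ))) :
    Module.finrank ℝ (LinearMap.ker (Matrix.toLin' L₀p)) = 1 ∧
      ∀ u : Fin n → ℝ, L₀p *ᵥ u = 0 → ∃ c : ℝ, u = c • f := by
  have hL : L₀p = signlessLaplacian ω := by
    rw [hL₀p, signlessLaplacian, funext hd, show A = of ω from Matrix.ext hA]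
  have hω_adj : ∀ i j, G.Adj i j → 0 < ω i j := fun i j hij => ((hG i j).1 hij).2
  have hff : ∀ i, f i * f i = 1 := hf ▸ indicator_sub_indicator_compl_mul_self T
  have hf_sign : ∀ i j, 0 < ω i j → f j = -f i := by
    intro i j hω
    have hij : i ≠ j := by
      rintro rfl
      exact hω.ne' (hdiag i)
    exact hf ▸ indicator_sub_indicator_compl_apply_of_separates T (hT i j ((hG i j).2 ⟨hij, hω⟩))
  subst hL
  exact ⟨finrank_ker_toLin'_signlessLaplacian hsymm hnonneg hω_adj hconn hff hf_sign,
    fun u => (signlessLaplacian_mulVec_eq_zero_iff_exists_eq_smul hsymm hnonneg hω_adj hconn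
      hff hf_sign u).1⟩

/-- If the graph is connected and bipartite with bipartition `(T, Tᶜ)`, the kernel of the
signless Laplacian `L₀⁺ = D + A` is one-dimensional and spanned by `χ_T - χ_{Tᶜ}`. -/
theorem signlessLaplacian_ker_of_bipartite
    (n : ℕ) (ω : Fin n → Fin n → ℝ)
    (hsymm : ∀ i j, ω i j = ω j i) (hnonneg : ∀ i j, 0 ≤ ω i j)
    (hdiag : ∀ i, ω i i = 0)
    (d : Fin n → ℝ) (hd : ∀ i, d i = ∑ j, ω i j) (hdpos : ∀ i, 0 < d i)
    (A : Matrix (Fin n) (Fin n) ℝ) (hA : ∀ i j, A i j = ω i j)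
    (L₀p : Matrix (Fin n) (Fin n) ℝ) (hL₀p : L₀p = Matrix.diagonal d + A)
    (G : SimpleGraph (Fin n)) (hG : ∀ i j, G.Adj i j ↔ i ≠ j ∧ 0 < ω i j)
    (hconn : G.Connected)
    (T : Set (Fin n))
    (hT : ∀ i j, G.Adj i j → ((i ∈ T ∧ j ∉ T) ∨ (j ∈ T ∧ i ∉ T)))
    (f : Fin n → ℝ)
    (hf : f = Set.indicator T (fun _ => (1 : ℝ))
        - Set.indicator Tᶜ (fun _ => (1 : ℝ))) :
    Module.finrank ℝ (LinearMap.ker (Matrix.toLin' L₀p)) = 1 ∧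
      ∀ u : Fin n → ℝ, L₀p *ᵥ u = 0 → ∃ c : ℝ, u = c • f :=
  signlessLaplacian_ker_of_bipartite_general n ω hsymm hnonneg hdiag d hd A hA L₀p hL₀p G hG hconn T
    hT f hf
end

section
/- (Γ-convergence lower bound) Let {ε_k} be a sequence of positive reals with ε_k → 0, let u_0 : V → ℝ, and let {u_k} be any sequence of functions V → ℝ converging to u_0 (i.e., u_k(i) → u_0(i) for every i ∈ V). Then: if u_0 takes only the values ±1, then Σ_{i,j∈V} ω_{ij}|u_0(i) + u_0(j)| ≤ liminf_{k→∞} f_{ε_k}^+(u_k); and if u_0(i) ∉ {−1,1} for some i ∈ V, then f_{ε_k}^+(u_k) → +∞ as k → ∞. -/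
/-!
The graph Dirichlet term `½ ∑ ω_{ij}(u_i + u_j)²` is continuous and bounded by `f_ε⁺`, so its
value at `u₀` bounds the liminf; for a `±1`-valued `u₀` that value is `∑ ω_{ij}|u₀_i + u₀_j|`,
because `(a + b)² = 2|a + b|` when `a, b ∈ {±1}`. If `u₀` is not `±1`-valued, the double-well
sum converges to a positive limit, and multiplied by `1/ε_k → ∞` it forces `f_{ε_k}⁺(u_k) → ∞`.
-/

open Filter

section SignlessGinzburgLandau

variable {ι : Type*} [Fintype ι]

noncomputable def signlessDirichlet (ω : ι → ι → ℝ) (u : ι → ℝ) : ℝ :=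
  (1 / 2) * ∑ i, ∑ j, ω i j * (u i + u j) ^ 2

def doubleWellSum (u : ι → ℝ) : ℝ :=
  ∑ i, ((u i) ^ 2 - 1) ^ 2

theorem continuous_signlessDirichlet (ω : ι → ι → ℝ) : Continuous (signlessDirichlet ω) := by
  unfold signlessDirichlet
  fun_prop

theorem continuous_doubleWellSum : Continuous (doubleWellSum (ι := ι)) := by
  unfold doubleWellSum
  fun_prop

theorem doubleWellSum_nonneg (u : ι → ℝ) : 0 ≤ doubleWellSum u :=
  Finset.sum_nonneg fun _ _ => sq_nonneg _

theorem sq_sq_sub_one_pos {x : ℝ} (h₁ : x ≠ -1) (h₂ : x ≠ 1) : 0 < (x ^ 2 - 1) ^ 2 := by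
  have : x ^ 2 - 1 ≠ 0 := by
    rw [show x ^ 2 - 1 = (x + 1) * (x - 1) by ring]
    exact mul_ne_zero (fun h => h₁ (eq_neg_of_add_eq_zero_left h)) (sub_ne_zero.2 h₂)
  positivity

theorem doubleWellSum_pos {u : ι → ℝ} (h : ∃ i, u i ≠ -1 ∧ u i ≠ 1) : 0 < doubleWellSum u := by
  obtain ⟨i, h₁, h₂⟩ := h
  exact Finset.sum_pos' (fun _ _ => sq_nonneg _) ⟨i, Finset.mem_univ i, sq_sq_sub_one_pos h₁ h₂⟩

theorem sq_add_eq_two_mul_abs_add {a b : ℝ} (ha : a = -1 ∨ a = 1) (hb : b = -1 ∨ b = 1) :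
    (a + b) ^ 2 = 2 * |a + b| := by
  rcases ha with rfl | rfl <;> rcases hb with rfl | rfl <;> norm_num

theorem signlessDirichlet_of_binary (ω : ι → ι → ℝ) {u : ι → ℝ} (hu : ∀ i, u i = -1 ∨ u i = 1) :
    signlessDirichlet ω u = ∑ i, ∑ j, ω i j * |u i + u j| := by
  simp only [signlessDirichlet, sq_add_eq_two_mul_abs_add (hu _) (hu _), Finset.mul_sum]
  refine Finset.sum_congr rfl fun i _ => Finset.sum_congr rfl fun j _ => ?_
  ring

end SignlessGinzburgLandau

theorem Filter.Tendsto.coe_le_liminf_ereal {α : Type*} {l : Filter α} [l.NeBot] {g f : α → ℝ}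
    {a : ℝ} (hg : Tendsto g l (nhds a)) (hgf : ∀ᶠ x in l, g x ≤ f x) :
    (a : EReal) ≤ liminf (fun x => (f x : EReal)) l := by
  rw [← (EReal.tendsto_coe.2 hg).liminf_eq]
  exact liminf_le_liminf (hgf.mono fun _ h => EReal.coe_le_coe h)

theorem signlessGL_gamma_liminf_general
    (n : ℕ) (ω : Fin n → Fin n → ℝ)
    (f : ℝ → (Fin n → ℝ) → ℝ)
    (hf : ∀ ε u, f ε u = (1 / 2) * ∑ i, ∑ j, ω i j * (u i + u j) ^ 2
        + (1 / ε) * ∑ i, ((u i) ^ 2 - 1) ^ 2)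
    (ε : ℕ → ℝ) (hεpos : ∀ k, 0 < ε k)
    (hεlim : Tendsto ε atTop (nhds 0))
    (u₀ : Fin n → ℝ) (u : ℕ → Fin n → ℝ)
    (hconv : ∀ i, Tendsto (fun k => u k i) atTop (nhds (u₀ i))) :
    ((∀ i, u₀ i = -1 ∨ u₀ i = 1) →
      ((∑ i, ∑ j, ω i j * |u₀ i + u₀ j| : ℝ) : EReal)
        ≤ Filter.liminf (fun k => ((f (ε k) (u k) : ℝ) : EReal)) atTop) ∧
    ((∃ i, u₀ i ≠ -1 ∧ u₀ i ≠ 1) →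
      Tendsto (fun k => f (ε k) (u k)) atTop atTop) := by
  have hf' : ∀ k, f (ε k) (u k) = signlessDirichlet ω (u k) + (ε k)⁻¹ * doubleWellSum (u k) :=
    fun k => by simp only [hf, signlessDirichlet, doubleWellSum, one_div]
  have hu : Tendsto u atTop (nhds u₀) := tendsto_pi_nhds.2 hconv
  have hD := (continuous_signlessDirichlet ω).tendsto u₀ |>.comp hu
  have hW := continuous_doubleWellSum.tendsto u₀ |>.comp hu
  refine ⟨fun hbin => ?_, fun hnot => ?_⟩
  · rw [← signlessDirichlet_of_binary ω hbin]
    refine hD.coe_le_liminf_ereal (Eventually.of_forall fun k => ?_)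
    rw [hf']
    exact le_add_of_nonneg_right <|
      mul_nonneg (inv_nonneg.2 (hεpos k).le) (doubleWellSum_nonneg _)
  · have hεinv : Tendsto ε⁻¹ atTop atTop :=
      Tendsto.inv_tendsto_nhdsGT_zero
        (tendsto_nhdsWithin_of_tendsto_nhds_of_eventually_within _ hεlim
          (Eventually.of_forall hεpos))
    exact (hD.add_atTop (hεinv.atTop_mul_pos (doubleWellSum_pos hnot) hW)).congr fun k =>
      (hf' k).symm

/-- Γ-convergence lower bound for the signless Ginzburg–Landau functionals: along any
sequence `ε_k ↓ 0` and `u_k → u₀` pointwise, if `u₀` is binary then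
`∑_{i,j} ω_{ij}|u₀_i + u₀_j| ≤ liminf f_{ε_k}⁺(u_k)`, and if `u₀` is not binary then
`f_{ε_k}⁺(u_k) → +∞`. -/
theorem signlessGL_gamma_liminf
    (n : ℕ) (ω : Fin n → Fin n → ℝ)
    (hsymm : ∀ i j, ω i j = ω j i) (hnonneg : ∀ i j, 0 ≤ ω i j)
    (hdiag : ∀ i, ω i i = 0)
    (f : ℝ → (Fin n → ℝ) → ℝ)
    (hf : ∀ ε u, f ε u = (1 / 2) * ∑ i, ∑ j, ω i j * (u i + u j) ^ 2
        + (1 / ε) * ∑ i, ((u i) ^ 2 - 1) ^ 2)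
    (ε : ℕ → ℝ) (hεpos : ∀ k, 0 < ε k)
    (hεlim : Tendsto ε atTop (nhds 0))
    (u₀ : Fin n → ℝ) (u : ℕ → Fin n → ℝ)
    (hconv : ∀ i, Tendsto (fun k => u k i) atTop (nhds (u₀ i))) :
    ((∀ i, u₀ i = -1 ∨ u₀ i = 1) →
      ((∑ i, ∑ j, ω i j * |u₀ i + u₀ j| : ℝ) : EReal)
        ≤ Filter.liminf (fun k => ((f (ε k) (u k) : ℝ) : EReal)) atTop) ∧
    ((∃ i, u₀ i ≠ -1 ∧ u₀ i ≠ 1) →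
      Tendsto (fun k => f (ε k) (u k)) atTop atTop) :=
  signlessGL_gamma_liminf_general n ω f hf ε hεpos hεlim u₀ u hconv
end

section
/- (Equi-coercivity) Let {ε_k} be a sequence of positive reals with ε_k → 0, and let {u_k} be a sequence of functions V → ℝ for which there exists C > 0 such that f_{ε_k}^+(u_k) < C for all k. Then there exists a subsequence {u_{k'}} and a binary function u_0 : V → {−1,1} such that u_{k'} converges to u_0 (pointwise on V). -/
open Filter Topology

/-
The Dirichlet term of `f_ε⁺` is nonnegative, so a bound `f_{ε_k}⁺(u_k) < C` forces the
double-well energy `∑ᵢ W(u_k i)` below `C ε_k → 0`. In particular `W(u_k i) ≤ 1` eventually,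
which confines `u_k` to the compact cube `[-2, 2]ⁿ`; a convergent subsequence exists, and by
continuity of `W` its limit lies in the zero set `{-1, 1}` of `W`.
-/

lemma mem_Icc_of_sq_sub_one_sq_le_one {x : ℝ} (h : (x ^ 2 - 1) ^ 2 ≤ 1) :
    x ∈ Set.Icc (-2 : ℝ) 2 := by
  constructor <;> nlinarith [sq_nonneg (x ^ 2 - 2)]

lemma eq_neg_one_or_eq_one_of_sq_sub_one_sq_eq_zero {x : ℝ} (h : (x ^ 2 - 1) ^ 2 = 0) :
    x = -1 ∨ x = 1 :=
  (sq_eq_one_iff.mp (sub_eq_zero.mp (pow_eq_zero_iff two_ne_zero |>.mp h))).symm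

lemma exists_subseq_tendsto_of_sq_sub_one_sq_tendsto_zero {ι : Type*} [Fintype ι]
    {x : ℕ → ι → ℝ} (hx : ∀ i, Tendsto (fun k => ((x k i) ^ 2 - 1) ^ 2) atTop (𝓝 0)) :
    ∃ φ : ℕ → ℕ, StrictMono φ ∧ ∃ u₀ : ι → ℝ,
      (∀ i, u₀ i = -1 ∨ u₀ i = 1) ∧ Tendsto (x ∘ φ) atTop (𝓝 u₀) := by
  have hcube : ∀ᶠ k in atTop, x k ∈ Set.univ.pi fun _ => Set.Icc (-2 : ℝ) 2 := by
    filter_upwards [eventually_all.2 fun i => (hx i).eventually (ge_mem_nhds one_pos)] with k hk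
    exact Set.mem_univ_pi.2 fun i => mem_Icc_of_sq_sub_one_sq_le_one (hk i)
  obtain ⟨u₀, -, φ, hφ, hlim⟩ :=
    (isCompact_univ_pi fun _ => isCompact_Icc).tendsto_subseq' hcube.frequently
  refine ⟨φ, hφ, u₀, fun i => eq_neg_one_or_eq_one_of_sq_sub_one_sq_eq_zero ?_, hlim⟩
  have hcoord : Tendsto (fun k => x (φ k) i) atTop (𝓝 (u₀ i)) := tendsto_pi_nhds.mp hlim i
  exact tendsto_nhds_unique (((hcoord.pow 2).sub_const 1).pow 2) ((hx i).comp hφ.tendsto_atTop)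

lemma sum_sq_sub_one_sq_lt_of_energy_lt {ι : Type*} [Fintype ι] {ω : ι → ι → ℝ}
    (hω : ∀ i j, 0 ≤ ω i j) {u : ι → ℝ} {ε C : ℝ} (hε : 0 < ε)
    (h : (1 / 2) * ∑ i, ∑ j, ω i j * (u i + u j) ^ 2 + (1 / ε) * ∑ i, ((u i) ^ 2 - 1) ^ 2 < C) :
    ∑ i, ((u i) ^ 2 - 1) ^ 2 < C * ε := by
  have hdirichlet : 0 ≤ ∑ i, ∑ j, ω i j * (u i + u j) ^ 2 :=
    Finset.sum_nonneg fun i _ => Finset.sum_nonneg fun j _ => mul_nonneg (hω i j) (sq_nonneg _)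
  have hwell : (1 / ε) * ∑ i, ((u i) ^ 2 - 1) ^ 2 < C := by linarith
  rwa [one_div, inv_mul_lt_iff₀ hε, mul_comm] at hwell

theorem signlessGL_equicoercive_general
    (n : ℕ) (ω : Fin n → Fin n → ℝ)
    (hnonneg : ∀ i j, 0 ≤ ω i j)
    (f : ℝ → (Fin n → ℝ) → ℝ)
    (hf : ∀ ε u, f ε u = (1 / 2) * ∑ i, ∑ j, ω i j * (u i + u j) ^ 2
        + (1 / ε) * ∑ i, ((u i) ^ 2 - 1) ^ 2)
    (ε : ℕ → ℝ) (hεpos : ∀ k, 0 < ε k)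
    (hεlim : Tendsto ε atTop (nhds 0))
    (u : ℕ → Fin n → ℝ)
    (C : ℝ) (hbound : ∀ k, f (ε k) (u k) < C) :
    ∃ φ : ℕ → ℕ, StrictMono φ ∧ ∃ u₀ : Fin n → ℝ,
      (∀ i, u₀ i = -1 ∨ u₀ i = 1) ∧
      ∀ i, Tendsto (fun k => u (φ k) i) atTop (nhds (u₀ i)) := by
  have hwell : ∀ k, ∑ i, ((u k i) ^ 2 - 1) ^ 2 < C * ε k := fun k =>
    sum_sq_sub_one_sq_lt_of_energy_lt hnonneg (hεpos k) (hf _ _ ▸ hbound k)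
  have hCε : Tendsto (fun k => C * ε k) atTop (𝓝 0) := by
    simpa using hεlim.const_mul C
  have hW : ∀ i, Tendsto (fun k => ((u k i) ^ 2 - 1) ^ 2) atTop (𝓝 0) := fun i =>
    squeeze_zero (fun _ => sq_nonneg _) (fun k => ((Finset.single_le_sum
      (fun j _ => sq_nonneg ((u k j) ^ 2 - 1)) (Finset.mem_univ i)).trans (hwell k).le)) hCε
  obtain ⟨φ, hφ, u₀, hbinary, hlim⟩ := exists_subseq_tendsto_of_sq_sub_one_sq_tendsto_zero hW
  exact ⟨φ, hφ, u₀, hbinary, tendsto_pi_nhds.mp hlim⟩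

/-- Equi-coercivity: if `ε_k ↓ 0` and `f_{ε_k}⁺(u_k) < C` uniformly in `k`, then some
subsequence of `u_k` converges pointwise to a binary function `u₀ : V → {-1,1}`. -/
theorem signlessGL_equicoercive
    (n : ℕ) (ω : Fin n → Fin n → ℝ)
    (hsymm : ∀ i j, ω i j = ω j i) (hnonneg : ∀ i j, 0 ≤ ω i j)
    (hdiag : ∀ i, ω i i = 0)
    (f : ℝ → (Fin n → ℝ) → ℝ)
    (hf : ∀ ε u, f ε u = (1 / 2) * ∑ i, ∑ j, ω i j * (u i + u j) ^ 2
        + (1 / ε) * ∑ i, ((u i) ^ 2 - 1) ^ 2)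
    (ε : ℕ → ℝ) (hεpos : ∀ k, 0 < ε k)
    (hεlim : Tendsto ε atTop (nhds 0))
    (u : ℕ → Fin n → ℝ)
    (C : ℝ) (hC : 0 < C) (hbound : ∀ k, f (ε k) (u k) < C) :
    ∃ φ : ℕ → ℕ, StrictMono φ ∧ ∃ u₀ : Fin n → ℝ,
      (∀ i, u₀ i = -1 ∨ u₀ i = 1) ∧
      ∀ i, Tendsto (fun k => u (φ k) i) atTop (nhds (u₀ i)) :=
  signlessGL_equicoercive_general n ω hnonneg f hf ε hεpos hεlim u C hbound
end
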